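/- arXiv:1907.01604 — 4 statements merged into one kernel-verified Lean document; each statement's English description precedes it below -/
import Mathlib

section
/- For any complex number α with |α| < 1 and any real x, |arg(1 - α e^{ix})| ≤ (π/2)·|α|. -/
open Real

lemma abs_arcsin_le_aux {t : ℝ} (ht : |t| ≤ 1) : |arcsin t| ≤ π / 2 * |t| := by
  have key : ∀ s : ℝ, 0 ≤ s → s ≤ 1 → arcsin s ≤ π / 2 * s := by
    intro s hs0 hs1
    rw [Real.arcsin_le_iff_le_sin ⟨by linarith, hs1⟩
      ⟨by nlinarith [pi_pos], by nlinarith [pi_pos]⟩]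
    have := Real.mul_le_sin (x := π / 2 * s) (by positivity) (by nlinarith [pi_pos])
    have hπ : (2 / π) * (π / 2 * s) = s := by
      field_simp
    linarith [this, hπ ▸ this]
  rcases le_or_gt 0 t with h | h
  · rw [abs_of_nonneg h, abs_of_nonneg (Real.arcsin_nonneg.2 h)]
    exact key t h (by rwa [abs_of_nonneg h] at ht)
  · rw [abs_of_neg h, abs_of_nonpos (by simpa using Real.arcsin_nonpos.mpr h.le)]
    rw [← Real.arcsin_neg]
    exact key (-t) (by linarith) (by rwa [abs_of_neg h] at ht)

theorem stmt3 (α : ℂ) (hα : ‖α‖ < 1) (x : ℝ) :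
    |Complex.arg (1 - α * Complex.exp (x * Complex.I))| ≤
      (π / 2) * ‖α‖ := by
  set w : ℂ := α * Complex.exp (x * Complex.I) with hw
  have habsw : ‖w‖ = ‖α‖ := by
    rw [hw, norm_mul, Complex.norm_exp]
    simp
  set z : ℂ := 1 - w with hz
  have hzre : z.re = 1 - w.re := by simp [hz]
  have hzim : z.im = -w.im := by simp [hz]
  have hwre : w.re ≤ ‖α‖ := habsw ▸ Complex.re_le_norm w
  have hrepos : 0 < z.re := by
    rw [hzre]; linarith
  have hzne : z ≠ 0 := fun h => by simp [h] at hrepos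
  have hr : 0 < ‖z‖ := norm_pos_iff.mpr hzne
  -- key inequality : |w.im| ≤ ‖α‖ * ‖z‖
  have hsq : w.im ^ 2 ≤ (‖α‖) ^ 2 * (‖z‖) ^ 2 := by
    have h1 : (‖z‖) ^ 2 = z.re ^ 2 + z.im ^ 2 := by
      rw [Complex.sq_norm, Complex.normSq_apply]; ring
    have h2 : (‖α‖) ^ 2 = w.re ^ 2 + w.im ^ 2 := by
      rw [← habsw, Complex.sq_norm, Complex.normSq_apply]; ring
    rw [h1, h2, hzre, hzim]
    nlinarith [sq_nonneg (w.re - (w.re ^ 2 + w.im ^ 2))]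
  have hkey : |w.im| ≤ ‖α‖ * ‖z‖ := by
    nlinarith [sq_abs w.im, abs_nonneg w.im, norm_nonneg α, hr.le,
      mul_nonneg (norm_nonneg α) hr.le]
  have harg : Complex.arg z = arcsin (z.im / ‖z‖) :=
    Complex.arg_of_re_nonneg hrepos.le
  have ht1 : |z.im / ‖z‖| ≤ 1 := by
    rw [abs_div, abs_of_pos hr, div_le_one hr]
    exact Complex.abs_im_le_norm z
  calc |Complex.arg z| ≤ π / 2 * |z.im / ‖z‖| := by
        rw [harg]; exact abs_arcsin_le_aux ht1
    _ ≤ π / 2 * ‖α‖ := by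
        apply mul_le_mul_of_nonneg_left _ (by positivity)
        rw [abs_div, abs_of_pos hr, div_le_iff₀ hr, hzim, abs_neg]
        exact hkey
end

section
/- All zeros of the paraorthogonal polynomial Φ_{n+1}^{(β)}(z) = zΦ_n(z) - conj(β)Φ_n*(z) lie on the unit circle. -/
open Polynomial Real

/-- The reversed polynomial `Φ*` at level `n`: `Φ*(z) = z^n conj(Φ(1/conj z))`,
i.e. the coefficients are conjugated and reversed (with respect to degree `n`). -/
noncomputable def szegoRev (n : ℕ) (p : Polynomial ℂ) : Polynomial ℂ :=
  (p.map (starRingEnd ℂ)).reflect n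

/-- The monic orthogonal polynomials on the unit circle obtained from the
Szegő recursion with Verblunsky coefficients `α`. -/
noncomputable def szegoPoly (α : ℕ → ℂ) : ℕ → Polynomial ℂ
  | 0 => 1
  | n + 1 =>
    Polynomial.X * szegoPoly α n -
      Polynomial.C ((starRingEnd ℂ) (α n)) * szegoRev n (szegoPoly α n)

lemma reflect_sub' (N : ℕ) (f g : Polynomial ℂ) :
    reflect N (f - g) = reflect N f - reflect N g := by
  ext i
  simp [coeff_reflect]

lemma reflect_reflect' (N : ℕ) (p : Polynomial ℂ) : reflect N (reflect N p) = p := by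
  ext i
  simp [coeff_reflect, revAt_invol]

lemma natDegree_reflect_le' {n : ℕ} {p : Polynomial ℂ} (hp : p.natDegree ≤ n) :
    (reflect n p).natDegree ≤ n := by
  rw [natDegree_le_iff_coeff_eq_zero]
  intro N hN
  rw [coeff_reflect, revAt_eq_self_of_lt hN]
  exact coeff_eq_zero_of_natDegree_lt (lt_of_le_of_lt hp hN)

lemma map_conj_map_conj (p : Polynomial ℂ) :
    (p.map (starRingEnd ℂ)).map (starRingEnd ℂ) = p := by
  ext i
  simp

lemma natDegree_szegoPoly_le (α : ℕ → ℂ) : ∀ n, (szegoPoly α n).natDegree ≤ n := by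
  intro n
  induction n with
  | zero => simp [szegoPoly]
  | succ n ih =>
    rw [szegoPoly]
    refine (natDegree_sub_le _ _).trans (max_le ?_ ?_)
    · exact (natDegree_mul_le).trans (by simp only [natDegree_X]; omega)
    · refine (natDegree_mul_le).trans ?_
      have : (szegoRev n (szegoPoly α n)).natDegree ≤ n :=
        natDegree_reflect_le' (natDegree_map_le.trans ih)
      simpa using this.trans (Nat.le_succ n)

lemma szegoRev_succ (α : ℕ → ℂ) (n : ℕ) :
    szegoRev (n + 1) (szegoPoly α (n + 1)) =
      szegoRev n (szegoPoly α n) - Polynomial.C (α n) * (Polynomial.X * szegoPoly α n) := by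
  set p := szegoPoly α n with hp
  have hpn : p.natDegree ≤ n := natDegree_szegoPoly_le α n
  have hpcn : (p.map (starRingEnd ℂ)).natDegree ≤ n := natDegree_map_le.trans hpn
  have hmap : (szegoRev n p).map (starRingEnd ℂ) = reflect n p := by
    rw [szegoRev, ← reflect_map, map_conj_map_conj]
  rw [szegoPoly]
  rw [szegoRev, Polynomial.map_sub, Polynomial.map_mul, Polynomial.map_mul,
    Polynomial.map_X, Polynomial.map_C, hmap, reflect_sub']
  have h1 : reflect (n + 1) (Polynomial.X * p.map (starRingEnd ℂ)) =
      (p.map (starRingEnd ℂ)).reflect n := by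
    rw [show n + 1 = 1 + n from add_comm n 1,
      reflect_mul _ _ natDegree_X_le hpcn, reflect_one_X, one_mul]
  have h2 : reflect (n + 1) (reflect n p) = Polynomial.X * p := by
    conv_lhs => rw [← one_mul (reflect n p)]
    rw [show n + 1 = 1 + n from add_comm n 1,
      reflect_mul _ _ (by simp) (natDegree_reflect_le' hpn), reflect_one, pow_one,
      reflect_reflect']
  rw [h1, reflect_C_mul, h2]
  simp [szegoRev, Complex.conj_conj]

lemma eval_map_conj (p : Polynomial ℂ) (w : ℂ) :
    (p.map (starRingEnd ℂ)).eval w = (starRingEnd ℂ) (p.eval ((starRingEnd ℂ) w)) := by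
  induction p using Polynomial.induction_on' with
  | add f g hf hg => simp [hf, hg]
  | monomial k a => simp

lemma abs_eval_szegoRev {n : ℕ} {p : Polynomial ℂ} (hp : p.natDegree ≤ n) {z : ℂ}
    (hz : z ≠ 0) :
    ‖(szegoRev n p).eval z‖ =
      ‖z‖ ^ n * ‖p.eval (((starRingEnd ℂ) z)⁻¹)‖ := by
  have hz' : z⁻¹ ≠ 0 := inv_ne_zero hz
  letI : Invertible (z⁻¹) := invertibleOfNonzero hz'
  have hInv : ⅟ (z⁻¹) = z := by rw [invOf_eq_inv, inv_inv]
  have h := Polynomial.eval₂_reflect_mul_pow (RingHom.id ℂ) (z⁻¹) n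
    (p.map (starRingEnd ℂ)) (natDegree_map_le.trans hp)
  rw [hInv] at h
  simp only [eval₂_eq_eval_map, Polynomial.map_id] at h
  have hev : ((szegoRev n p).eval z) * (z⁻¹) ^ n = (p.map (starRingEnd ℂ)).eval z⁻¹ := h
  have : (szegoRev n p).eval z = z ^ n * (p.map (starRingEnd ℂ)).eval z⁻¹ := by
    rw [← hev, mul_left_comm, ← mul_pow, mul_inv_cancel₀ hz, one_pow, mul_one]
  rw [this, eval_map_conj, map_inv₀]
  simp [mul_comm]

lemma para_core {a u ψ : ℂ} (ha : ‖a‖ < 1) (h : ‖u‖ < ‖ψ‖) :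
    ‖u - (starRingEnd ℂ) a * ψ‖ < ‖ψ - a * u‖ := by
  have hre : (u * (starRingEnd ℂ) ((starRingEnd ℂ) a * ψ)).re
      = (ψ * (starRingEnd ℂ) (a * u)).re := by
    have hconj : ψ * (starRingEnd ℂ) (a * u)
        = (starRingEnd ℂ) (u * (starRingEnd ℂ) ((starRingEnd ℂ) a * ψ)) := by
      simp only [map_mul, Complex.conj_conj]
      ring
    rw [hconj, Complex.conj_re]
  have key : ‖u - (starRingEnd ℂ) a * ψ‖ ^ 2 <
      ‖ψ - a * u‖ ^ 2 := by
    rw [Complex.sq_norm, Complex.sq_norm, Complex.normSq_sub, Complex.normSq_sub,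
      Complex.normSq_mul, Complex.normSq_mul, Complex.normSq_conj, hre]
    have ha2 : Complex.normSq a < 1 := by
      rw [← Complex.sq_norm]; nlinarith [norm_nonneg a]
    have hu2 : Complex.normSq u < Complex.normSq ψ := by
      rw [← Complex.sq_norm, ← Complex.sq_norm]
      exact pow_lt_pow_left₀ h (norm_nonneg u) two_ne_zero
    nlinarith [Complex.normSq_nonneg a, Complex.normSq_nonneg u, Complex.normSq_nonneg ψ]
  exact lt_of_pow_lt_pow_left₀ 2 (norm_nonneg _) key

lemma szego_key (α : ℕ → ℂ) (hα : ∀ j, ‖α j‖ < 1) :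
    ∀ n, ∀ z : ℂ, ‖z‖ < 1 →
      ‖z * (szegoPoly α n).eval z‖ <
        ‖(szegoRev n (szegoPoly α n)).eval z‖ := by
  intro n
  induction n with
  | zero =>
    intro z hz
    simpa [szegoPoly, szegoRev, reflect_one] using hz
  | succ n ih =>
    intro z hz
    set φ := (szegoPoly α n).eval z
    set ψ := (szegoRev n (szegoPoly α n)).eval z
    have hev : (szegoPoly α (n + 1)).eval z = z * φ - (starRingEnd ℂ) (α n) * ψ := by
      rw [szegoPoly]; simp [φ, ψ]
    have hrev : (szegoRev (n + 1) (szegoPoly α (n + 1))).eval z = ψ - α n * (z * φ) := by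
      rw [szegoRev_succ]; simp only [eval_sub, eval_mul, eval_C, eval_X]; rfl
    rw [hev, hrev, norm_mul]
    have hcore : ‖z * φ - (starRingEnd ℂ) (α n) * ψ‖ <
        ‖ψ - α n * (z * φ)‖ := para_core (hα n) (ih z hz)
    calc ‖z‖ * ‖z * φ - (starRingEnd ℂ) (α n) * ψ‖
        ≤ ‖z * φ - (starRingEnd ℂ) (α n) * ψ‖ :=
          mul_le_of_le_one_left (norm_nonneg _) hz.le
      _ < ‖ψ - α n * (z * φ)‖ := hcore

lemma szego_key_gt (α : ℕ → ℂ) (hα : ∀ j, ‖α j‖ < 1) (n : ℕ)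
    {z : ℂ} (hz : 1 < ‖z‖) :
    ‖(szegoRev n (szegoPoly α n)).eval z‖ <
      ‖z‖ * ‖(szegoPoly α n).eval z‖ := by
  have hz0 : z ≠ 0 := by
    intro h; rw [h] at hz; simp at hz; linarith
  set w : ℂ := ((starRingEnd ℂ) z)⁻¹ with hw
  have habsw : ‖w‖ = (‖z‖)⁻¹ := by
    rw [hw, norm_inv, Complex.norm_conj]
  have hwlt : ‖w‖ < 1 := by
    rw [habsw]; exact inv_lt_one_of_one_lt₀ hz
  have hpn : (szegoPoly α n).natDegree ≤ n := natDegree_szegoPoly_le α n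
  have hrevn : (szegoRev n (szegoPoly α n)).natDegree ≤ n :=
    natDegree_reflect_le' (natDegree_map_le.trans hpn)
  -- |Φ*(z)| = |z|^n |Φ(w)|
  have h1 : ‖(szegoRev n (szegoPoly α n)).eval z‖
      = ‖z‖ ^ n * ‖(szegoPoly α n).eval w‖ :=
    abs_eval_szegoRev hpn hz0
  -- Φ = szegoRev n (szegoRev n Φ)
  have hinv : szegoRev n (szegoRev n (szegoPoly α n)) = szegoPoly α n := by
    rw [szegoRev, szegoRev, ← reflect_map, map_conj_map_conj, reflect_reflect']
  have h2 : ‖(szegoPoly α n).eval z‖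
      = ‖z‖ ^ n * ‖(szegoRev n (szegoPoly α n)).eval w‖ := by
    conv_lhs => rw [← hinv]
    exact abs_eval_szegoRev hrevn hz0
  have hkey := szego_key α hα n w hwlt
  rw [norm_mul, habsw] at hkey
  have hzpos : (0:ℝ) < ‖z‖ := by linarith
  have hzn : (0:ℝ) < ‖z‖ ^ n := pow_pos hzpos n
  rw [h1, h2]
  have : ‖(szegoPoly α n).eval w‖ <
      ‖z‖ * ‖(szegoRev n (szegoPoly α n)).eval w‖ := by
    calc ‖(szegoPoly α n).eval w‖
        = ‖z‖ * ((‖z‖)⁻¹ * ‖(szegoPoly α n).eval w‖) := by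
          field_simp
      _ < ‖z‖ * ‖(szegoRev n (szegoPoly α n)).eval w‖ :=
          (mul_lt_mul_iff_right₀ hzpos).mpr hkey
  calc ‖z‖ ^ n * ‖(szegoPoly α n).eval w‖
      < ‖z‖ ^ n * (‖z‖ * ‖(szegoRev n (szegoPoly α n)).eval w‖) := by
        exact (mul_lt_mul_iff_right₀ hzn).mpr this
    _ = ‖z‖ * (‖z‖ ^ n * ‖(szegoRev n (szegoPoly α n)).eval w‖) := by ring

theorem stmt10 (α : ℕ → ℂ) (hα : ∀ j, ‖α j‖ < 1) (n : ℕ)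
    (β : ℂ) (hβ : ‖β‖ = 1) :
    ∀ z : ℂ,
      (Polynomial.X * szegoPoly α n -
          Polynomial.C ((starRingEnd ℂ) β) * szegoRev n (szegoPoly α n)).eval z = 0 →
      ‖z‖ = 1 := by
  intro z hz
  simp only [eval_sub, eval_mul, eval_X, eval_C] at hz
  have heq : z * (szegoPoly α n).eval z = (starRingEnd ℂ) β * (szegoRev n (szegoPoly α n)).eval z := by
    linear_combination hz
  have habs : ‖z * (szegoPoly α n).eval z‖
      = ‖(szegoRev n (szegoPoly α n)).eval z‖ := by
    rw [heq, norm_mul, Complex.norm_conj, hβ, one_mul]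
  rcases lt_trichotomy (‖z‖) 1 with h | h | h
  · exact absurd habs (ne_of_lt (szego_key α hα n z h))
  · exact h
  · have := szego_key_gt α hα n h
    rw [← norm_mul] at this
    exact absurd habs.symm (ne_of_lt this)
end

section
/- With the Prüfer phase η_n as above, for any real numbers λ ≤ τ: η_n(τ) - η_n(λ) ≥ (n+1)(τ - λ) - 2π·Σ_{j=0}^{n-1} |α_j|. -/
open Polynomial Real

/-- The Prüfer phase: `η_0(θ) = θ` and
`η_{n+1}(θ) = η_n(θ) + θ - 2 arg(1 - α_n e^{i η_n(θ)})`, with `arg ∈ (-π, π]`. -/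
noncomputable def prufer (α : ℕ → ℂ) : ℕ → ℝ → ℝ
  | 0, θ => θ
  | n + 1, θ =>
    prufer α n θ + θ -
      2 * Complex.arg (1 - α n * Complex.exp ((prufer α n θ : ℂ) * Complex.I))

lemma argBound (w : ℂ) (hw : ‖w‖ < 1) :
    |Complex.arg (1 - w)| ≤ π / 2 * ‖w‖ := by
  have h1 : |w.re| ≤ ‖w‖ := Complex.abs_re_le_norm w
  have h1' := abs_le.1 h1
  have hre : 0 < (1 - w).re := by
    simp only [Complex.sub_re, Complex.one_re]; linarith
  have hz : (1 - w) ≠ 0 := by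
    intro hzz; rw [hzz] at hre; simp at hre
  have habs : 0 < ‖1 - w‖ := norm_pos_iff.mpr hz
  have harg : |Complex.arg (1 - w)| < π / 2 :=
    Complex.abs_arg_lt_pi_div_two_iff.2 (Or.inl hre)
  have hkey : |w.im| ≤ ‖w‖ * ‖1 - w‖ := by
    have hA : ‖w‖ ^ 2 = w.re ^ 2 + w.im ^ 2 := by
      rw [Complex.sq_norm, Complex.normSq_apply]; ring
    have hB : (‖1 - w‖) ^ 2 = (1 - w.re) ^ 2 + w.im ^ 2 := by
      rw [Complex.sq_norm, Complex.normSq_apply]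
      simp only [Complex.sub_re, Complex.sub_im, Complex.one_re, Complex.one_im]
      ring
    have hsq : |w.im| ^ 2 ≤ (‖w‖ * ‖1 - w‖) ^ 2 := by
      rw [sq_abs, mul_pow, hA, hB]
      nlinarith [sq_nonneg (w.re ^ 2 + w.im ^ 2 - w.re)]
    have := Real.sqrt_le_sqrt hsq
    rwa [Real.sqrt_sq (abs_nonneg _), Real.sqrt_sq (by positivity)] at this
  have hms := Real.mul_le_sin (abs_nonneg (Complex.arg (1 - w))) harg.le
  have hsle : Real.sin |Complex.arg (1 - w)| ≤ |Real.sin (Complex.arg (1 - w))| := by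
    rcases abs_cases (Complex.arg (1 - w)) with ⟨he, _⟩ | ⟨he, _⟩ <;> rw [he]
    · exact le_abs_self _
    · rw [Real.sin_neg]; exact neg_le_abs _
  have heq : |Real.sin (Complex.arg (1 - w))| = |w.im| / ‖1 - w‖ := by
    rw [Complex.sin_arg, abs_div, abs_of_nonneg habs.le]
    simp
  have hfin : |w.im| / ‖1 - w‖ ≤ ‖w‖ := by
    rw [div_le_iff₀ habs]; linarith
  have hchain : 2 / π * |Complex.arg (1 - w)| ≤ ‖w‖ := by
    calc 2 / π * |Complex.arg (1 - w)| ≤ Real.sin |Complex.arg (1 - w)| := hms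
      _ ≤ |Real.sin (Complex.arg (1 - w))| := hsle
      _ = |w.im| / ‖1 - w‖ := heq
      _ ≤ ‖w‖ := hfin
  have hpi := Real.pi_pos
  calc |Complex.arg (1 - w)| = π / 2 * (2 / π * |Complex.arg (1 - w)|) := by
        field_simp
    _ ≤ π / 2 * ‖w‖ := by
        exact mul_le_mul_of_nonneg_left hchain (by positivity)

theorem stmt14 (α : ℕ → ℂ) (hα : ∀ j, ‖α j‖ < 1) (n : ℕ)
    (lam tau : ℝ) (h : lam ≤ tau) :
    ((n : ℝ) + 1) * (tau - lam) -
        2 * π * ∑ j ∈ Finset.range n, ‖α j‖ ≤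
      prufer α n tau - prufer α n lam := by
  induction n with
  | zero => simp [prufer]
  | succ n ih =>
    have habs : ∀ θ : ℝ, ‖α n * Complex.exp ((θ : ℂ) * Complex.I)‖ < 1 := by
      intro θ
      rw [norm_mul, Complex.norm_exp_ofReal_mul_I, mul_one]
      exact hα n
    have hb1 := argBound _ (habs (prufer α n tau))
    have hb2 := argBound _ (habs (prufer α n lam))
    rw [norm_mul, Complex.norm_exp_ofReal_mul_I, mul_one] at hb1 hb2
    have hb1' := abs_le.1 hb1
    have hb2' := abs_le.1 hb2
    rw [Finset.sum_range_succ]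
    simp only [prufer]
    push_cast
    have hpi := Real.pi_pos
    obtain ⟨hb1l, hb1r⟩ := hb1'
    obtain ⟨hb2l, hb2r⟩ := hb2'
    nlinarith [ih]
end

section
/- Suppose the Verblunsky coefficients satisfy Σ_{j=0}^{n-1}|α_j| ≤ M for all n (i.e., ℓ¹ summable with sum ≤ M). Then for any λ ∈ ℝ and any n with (n+1)·δ > 2π + 2πM where δ > 0, the interval (λ, λ+δ) contains a point t with η_n(t) - η_n(λ) ≥ 2π; consequently every arc of the unit circle of angular length δ > (2π + 2π·Σ|α_j|)/(n+1) contains a zero of Φ_{n+1}^{(β)} for every |β| = 1. -/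
open Polynomial Real

lemma arg_one_sub_bound {w : ℂ} (hw : ‖w‖ < 1) :
    |Complex.arg (1 - w)| ≤ π / 2 * ‖w‖ := by
  have hre : 0 < (1 - w).re := by
    have h1 : w.re ≤ ‖w‖ := (abs_le.1 (Complex.abs_re_le_norm w)).2
    simp only [Complex.sub_re, Complex.one_re]
    linarith
  have hz : (1 - w) ≠ 0 := fun h => by simp [h] at hre
  have hb : 0 < ‖1 - w‖ := norm_pos_iff.mpr hz
  have hhalf : |Complex.arg (1 - w)| ≤ π / 2 :=
    Complex.abs_arg_le_pi_div_two_iff.2 hre.le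
  have hkey : |w.im| ≤ ‖w‖ * ‖1 - w‖ := by
    have h1 : (‖w‖) ^ 2 = w.re ^ 2 + w.im ^ 2 := by
      rw [Complex.sq_norm, Complex.normSq_apply]; ring
    have h2 : (‖1 - w‖) ^ 2 = (1 - w.re) ^ 2 + w.im ^ 2 := by
      rw [Complex.sq_norm, Complex.normSq_apply]
      simp [Complex.sub_re, Complex.sub_im]; ring
    have h3 : |w.im| ^ 2 = w.im ^ 2 := sq_abs _
    nlinarith [sq_nonneg (w.re - w.re ^ 2 - w.im ^ 2), abs_nonneg w.im,
      mul_nonneg (norm_nonneg w) (norm_nonneg (1 - w)),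
      norm_nonneg w, norm_nonneg (1 - w)]
  have hsin : Real.sin |Complex.arg (1 - w)| = |w.im| / ‖1 - w‖ := by
    rcases abs_cases (Complex.arg (1 - w)) with ⟨h, _⟩ | ⟨h, hneg⟩
    · rw [h, Complex.sin_arg]
      have him : 0 ≤ (1 - w).im / ‖1 - w‖ := by
        rw [← Complex.sin_arg]
        exact Real.sin_nonneg_of_nonneg_of_le_pi (by rw [← h]; exact abs_nonneg _)
          (by rw [← h]; exact hhalf.trans (by linarith [pi_pos]))
      have : (1 - w).im = -w.im := by simp
      rw [this] at him ⊢
      rw [le_div_iff₀ hb] at him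
      rw [abs_of_nonpos (by linarith)]
    · rw [h, Real.sin_neg, Complex.sin_arg]
      have : (1 - w).im = -w.im := by simp
      rw [this]
      have him : w.im / ‖1 - w‖ ≥ 0 := by
        have hs : Real.sin (Complex.arg (1 - w)) ≤ 0 := by
          apply Real.sin_nonpos_of_nonpos_of_neg_pi_le (by linarith)
          linarith [Complex.neg_pi_lt_arg (1 - w)]
        rw [Complex.sin_arg, this] at hs
        simpa [neg_div] using hs
      rw [ge_iff_le, le_div_iff₀ hb] at him
      rw [abs_of_nonneg (by linarith)]
      field_simp
  have hms := Real.mul_le_sin (abs_nonneg (Complex.arg (1 - w))) hhalf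
  rw [hsin] at hms
  have h2 : |w.im| / ‖1 - w‖ ≤ ‖w‖ := by
    rw [div_le_iff₀ hb]; exact hkey
  have hπ := pi_pos
  have h3 : 2 * |Complex.arg (1 - w)| ≤ π * ‖w‖ := by
    calc 2 * |Complex.arg (1 - w)| = π * (2 / π * |Complex.arg (1 - w)|) := by
          field_simp
      _ ≤ π * ‖w‖ := mul_le_mul_of_nonneg_left (hms.trans h2) hπ.le
  linarith

lemma natDegree_reflect_le {q : Polynomial ℂ} {n : ℕ} (h : q.natDegree ≤ n) :
    (q.reflect n).natDegree ≤ n := by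
  rw [natDegree_le_iff_coeff_eq_zero]
  intro m hm
  rw [coeff_reflect, revAt_eq_self_of_lt hm]
  exact coeff_eq_zero_of_natDegree_lt (h.trans_lt hm)

lemma reflect_reflect (q : Polynomial ℂ) (n : ℕ) : (q.reflect n).reflect n = q := by
  ext i
  simp [coeff_reflect]

lemma szegoPoly_natDegree_le (α : ℕ → ℂ) (n : ℕ) : (szegoPoly α n).natDegree ≤ n := by
  induction n with
  | zero => simp [szegoPoly]
  | succ n ih =>
    rw [szegoPoly]
    refine (natDegree_sub_le _ _).trans (max_le ?_ ?_)
    · refine natDegree_mul_le.trans ?_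
      have := natDegree_X_le (R := ℂ)
      omega
    · refine natDegree_mul_le.trans ?_
      have h1 : (szegoRev n (szegoPoly α n)).natDegree ≤ n :=
        natDegree_reflect_le (natDegree_map_le.trans ih)
      have h2 := (natDegree_C ((starRingEnd ℂ) (α n))).le
      omega

lemma abs_mul_expI_lt {a : ℂ} (ha : ‖a‖ < 1) (x : ℝ) :
    ‖a * Complex.exp ((x : ℂ) * Complex.I)‖ < 1 := by
  rwa [norm_mul, Complex.norm_exp_ofReal_mul_I, mul_one]

lemma one_sub_ne {a : ℂ} (ha : ‖a‖ < 1) : (1 : ℂ) - a ≠ 0 := by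
  intro h
  have : a = 1 := by linear_combination -h
  simp [this] at ha

lemma exp_neg_two_arg (w : ℂ) :
    Complex.exp ((-(2 * Complex.arg w) : ℝ) * Complex.I) * w = (starRingEnd ℂ) w := by
  have h : ∀ r a : ℝ, Complex.exp ((-(2 * a) : ℝ) * Complex.I) *
      ((r : ℂ) * Complex.exp ((a : ℂ) * Complex.I)) =
      (starRingEnd ℂ) ((r : ℂ) * Complex.exp ((a : ℂ) * Complex.I)) := by
    intro r a
    rw [map_mul, Complex.conj_ofReal, ← Complex.exp_conj, map_mul, Complex.conj_ofReal,
      Complex.conj_I, ← mul_assoc, mul_comm _ ((r : ℂ)), mul_assoc, ← Complex.exp_add]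
    push_cast
    ring_nf
  have h2 := h (‖w‖) (Complex.arg w)
  rwa [Complex.norm_mul_exp_arg_mul_I] at h2

lemma key_eval (α : ℕ → ℂ) (hα : ∀ j, ‖α j‖ < 1) (θ : ℝ) (n : ℕ) :
    (szegoRev n (szegoPoly α n)).eval (Complex.exp ((θ : ℂ) * Complex.I)) ≠ 0 ∧
      Complex.exp ((θ : ℂ) * Complex.I) *
          (szegoPoly α n).eval (Complex.exp ((θ : ℂ) * Complex.I)) =
        Complex.exp ((prufer α n θ : ℂ) * Complex.I) *
          (szegoRev n (szegoPoly α n)).eval (Complex.exp ((θ : ℂ) * Complex.I)) := by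
  induction n with
  | zero =>
    constructor
    · simp [szegoRev, szegoPoly, reflect_one, Complex.exp_ne_zero]
    · simp [szegoRev, szegoPoly, prufer, reflect_one]
  | succ n ih =>
    obtain ⟨hR, hrel⟩ := ih
    set z := Complex.exp ((θ : ℂ) * Complex.I) with hz
    set η := prufer α n θ with hη
    set g := (szegoPoly α n).eval z with hg
    set R := (szegoRev n (szegoPoly α n)).eval z with hRdef
    set w : ℂ := 1 - α n * Complex.exp ((η : ℂ) * Complex.I) with hw
    have hwne : w ≠ 0 := one_sub_ne (abs_mul_expI_lt (hα n) η)
    have hη1 : prufer α (n + 1) θ = η + θ - 2 * Complex.arg w := by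
      rw [prufer]
    have hRsucc : (szegoRev (n + 1) (szegoPoly α (n + 1))).eval z = R * w := by
      rw [szegoRev_succ]
      simp only [eval_sub, eval_mul, eval_C, eval_X, ← hRdef, ← hg]
      rw [hrel, hw]
      ring
    constructor
    · rw [hRsucc]; exact mul_ne_zero hR hwne
    · rw [hRsucc]
      have hgsucc : (szegoPoly α (n + 1)).eval z = z * g - (starRingEnd ℂ) (α n) * R := by
        rw [szegoPoly]
        simp [← hg, ← hRdef]
      rw [hgsucc, hη1]
      -- z * (z*g - conj(αn)*R) = exp((η+θ-2 arg w) I) * (R * w)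
      have hconj : (1 : ℂ) - (starRingEnd ℂ) (α n) * Complex.exp (-(η : ℂ) * Complex.I) =
          Complex.exp ((-(2 * Complex.arg w) : ℝ) * Complex.I) * w := by
        rw [exp_neg_two_arg w, hw]
        rw [map_sub, map_one, map_mul, ← Complex.exp_conj, map_mul, Complex.conj_ofReal,
          Complex.conj_I]
        ring_nf
      have hzg : z * g = Complex.exp ((η : ℂ) * Complex.I) * R := hrel
      have hexp : Complex.exp (((η + θ - 2 * Complex.arg w : ℝ) : ℂ) * Complex.I) =
          Complex.exp ((η : ℂ) * Complex.I) * z *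
            Complex.exp ((-(2 * Complex.arg w) : ℝ) * Complex.I) := by
        rw [hz, ← Complex.exp_add, ← Complex.exp_add]
        push_cast
        ring_nf
      rw [hexp]
      have expand : z * (z * g - (starRingEnd ℂ) (α n) * R) =
          z * Complex.exp ((η : ℂ) * Complex.I) * R *
            ((1 : ℂ) - (starRingEnd ℂ) (α n) * Complex.exp (-(η : ℂ) * Complex.I)) := by
        rw [hzg]
        have hee : Complex.exp ((η : ℂ) * Complex.I) * Complex.exp (-(η : ℂ) * Complex.I) = 1 := by
          rw [← Complex.exp_add]; ring_nf; exact Complex.exp_zero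
        linear_combination (z * (starRingEnd ℂ) (α n) * R) * hee
      rw [expand, hconj]
      ring

lemma prufer_continuous (α : ℕ → ℂ) (hα : ∀ j, ‖α j‖ < 1) (n : ℕ) :
    Continuous (prufer α n) := by
  induction n with
  | zero => exact continuous_id
  | succ n ih =>
    have hw : Continuous fun θ : ℝ =>
        (1 : ℂ) - α n * Complex.exp ((prufer α n θ : ℂ) * Complex.I) := by
      fun_prop
    have harg : Continuous fun θ : ℝ =>
        Complex.arg (1 - α n * Complex.exp ((prufer α n θ : ℂ) * Complex.I)) := by
      rw [continuous_iff_continuousAt]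
      intro θ
      refine (Complex.continuousAt_arg ?_).comp hw.continuousAt
      left
      have h1 := (abs_le.1 (Complex.abs_re_le_norm
        (α n * Complex.exp ((prufer α n θ : ℂ) * Complex.I)))).2
      have h2 := abs_mul_expI_lt (hα n) (prufer α n θ)
      simp only [Complex.sub_re, Complex.one_re]
      linarith
    show Continuous fun θ => prufer α n θ + θ - 2 * Complex.arg _
    fun_prop

lemma prufer_lower (α : ℕ → ℂ) (hα : ∀ j, ‖α j‖ < 1) (s t : ℝ) (n : ℕ) :
    ((n : ℝ) + 1) * (t - s) - 2 * π * (∑ j ∈ Finset.range n, ‖α j‖) ≤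
      prufer α n t - prufer α n s := by
  induction n with
  | zero => simp [prufer]
  | succ n ih =>
    have hbt := arg_one_sub_bound (abs_mul_expI_lt (hα n) (prufer α n t))
    have hbs := arg_one_sub_bound (abs_mul_expI_lt (hα n) (prufer α n s))
    rw [norm_mul, Complex.norm_exp_ofReal_mul_I, mul_one] at hbt hbs
    rw [Finset.sum_range_succ]
    simp only [prufer]
    have h1 := abs_le.1 hbt
    have h2 := abs_le.1 hbs
    push_cast
    nlinarith [pi_pos]

theorem stmt16 (α : ℕ → ℂ) (hα : ∀ j, ‖α j‖ < 1) (M : ℝ)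
    (hM : ∀ n : ℕ, ∑ j ∈ Finset.range n, ‖α j‖ ≤ M)
    (lam δ : ℝ) (hδ : 0 < δ) (n : ℕ)
    (hn : 2 * π + 2 * π * M < ((n : ℝ) + 1) * δ) :
    (∃ t ∈ Set.Ioo lam (lam + δ), 2 * π ≤ prufer α n t - prufer α n lam) ∧
      ∀ β : ℂ, ‖β‖ = 1 →
        ∃ t ∈ Set.Ioo lam (lam + δ),
          (Polynomial.X * szegoPoly α n -
              Polynomial.C ((starRingEnd ℂ) β) * szegoRev n (szegoPoly α n)).eval
            (Complex.exp (t * Complex.I)) = 0 := by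
  have hπ := pi_pos
  have hM0 : 0 ≤ M := le_trans (by simp) (hM 0)
  have hn1 : (0 : ℝ) < (n : ℝ) + 1 := by positivity
  set c : ℝ := (2 * π + 2 * π * M) / ((n : ℝ) + 1) with hc
  have hc0 : 0 < c := by positivity
  have hcδ : c < δ := by
    rw [hc, div_lt_iff₀ hn1]
    linarith [hn]
  set t₀ : ℝ := lam + c with ht₀
  have ht₀mem : t₀ ∈ Set.Ioo lam (lam + δ) := ⟨by linarith, by linarith⟩
  have hkey : 2 * π ≤ prufer α n t₀ - prufer α n lam := by
    have h1 := prufer_lower α hα lam t₀ n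
    have h2 : ((n : ℝ) + 1) * (t₀ - lam) = 2 * π + 2 * π * M := by
      rw [ht₀, add_sub_cancel_left, hc, mul_div_cancel₀ _ hn1.ne']
    have h3 : 2 * π * (∑ j ∈ Finset.range n, ‖α j‖) ≤ 2 * π * M :=
      mul_le_mul_of_nonneg_left (hM n) (by positivity)
    linarith
  refine ⟨⟨t₀, ht₀mem, hkey⟩, ?_⟩
  intro β hβ
  -- pick the phase target
  set s : ℝ := toIocMod Real.two_pi_pos 0 (-(Complex.arg β) - prufer α n lam) with hs
  have hsmem : s ∈ Set.Ioc 0 (0 + 2 * π) := toIocMod_mem_Ioc Real.two_pi_pos _ _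
  obtain ⟨hs0, hs2π⟩ := hsmem
  rw [zero_add] at hs2π
  have hymem : prufer α n lam + s ∈ Set.Icc (prufer α n lam) (prufer α n t₀) := by
    constructor <;> [linarith; linarith]
  have hlamt₀ : lam ≤ t₀ := by linarith
  have hIVT := intermediate_value_Icc hlamt₀ ((prufer_continuous α hα n).continuousOn)
  obtain ⟨t, htmem, hteq⟩ := hIVT hymem
  refine ⟨t, ⟨?_, lt_of_le_of_lt htmem.2 ht₀mem.2⟩, ?_⟩
  · -- lam < t
    rcases lt_or_eq_of_le htmem.1 with h | h
    · exact h
    · exfalso; rw [← h] at hteq; linarith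
  · -- the polynomial vanishes at exp(t I)
    obtain ⟨hR, hrel⟩ := key_eval α hα t n
    have hexp : Complex.exp ((prufer α n t : ℂ) * Complex.I) = (starRingEnd ℂ) β := by
      have hβeq : ((‖β‖ : ℝ) : ℂ) * Complex.exp ((Complex.arg β : ℂ) * Complex.I) = β :=
        Complex.norm_mul_exp_arg_mul_I β
      rw [hβ] at hβeq
      push_cast at hβeq
      rw [one_mul] at hβeq
      have hmod : ∃ m : ℤ, prufer α n t = -(Complex.arg β) + m * (2 * π) := by
        have h1 := toIocMod_sub_self Real.two_pi_pos 0 (-(Complex.arg β) - prufer α n lam)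
        rw [← hs] at h1
        refine ⟨-toIocDiv Real.two_pi_pos 0 (-(Complex.arg β) - prufer α n lam), ?_⟩
        rw [hteq]
        push_cast
        rw [zsmul_eq_mul] at h1
        push_cast at h1
        linarith
      obtain ⟨m, hm⟩ := hmod
      have hconj : (starRingEnd ℂ) β = Complex.exp (-(Complex.arg β : ℂ) * Complex.I) := by
        conv_lhs => rw [← hβeq]
        rw [← Complex.exp_conj, map_mul, Complex.conj_ofReal, Complex.conj_I]
        ring_nf
      rw [hm, hconj]
      push_cast
      rw [add_mul, Complex.exp_add]
      have h2 : Complex.exp ((m : ℂ) * (2 * (π : ℂ)) * Complex.I) = 1 := by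
        simpa [mul_assoc] using Complex.exp_int_mul_two_pi_mul_I m
      rw [h2, mul_one]
    simp only [eval_sub, eval_mul, eval_C, eval_X]
    rw [show Complex.exp ((t : ℂ) * Complex.I) *
        (szegoPoly α n).eval (Complex.exp ((t : ℂ) * Complex.I)) =
        Complex.exp ((prufer α n t : ℂ) * Complex.I) *
        (szegoRev n (szegoPoly α n)).eval (Complex.exp ((t : ℂ) * Complex.I)) from hrel,
      hexp]
    ring
end
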